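/- Let x > 0 and define ξ1(x, ε) = e^{ε/x}·E1(ε/x)/x for ε > 0, where E1(z) = ∫_z^∞ e^{−t}/t dt. Then, as ε → 0 from the right, ξ1(x, ε) + (1/x)·(γ' + log(ε/x)) = O(ε·log ε); that is, the function ε ↦ ξ1(x, ε) + (1/x)·(γ' + log(ε/x)) is big-O of ε ↦ ε·log ε along the filter of right-neighborhoods of 0, where γ' is the Euler–Mascheroni constant. -/

import Mathlib

/-! Differentiating the Gamma integral at `1` gives `∫₀^∞ log t · e^{-t} dt = -γ`, and integrating
by parts on `(z, ∞)` turns the tail of this integral into `e^{-z} log z + E1 z`. Hence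
`e^z E1 z + γ + log z = (1 - e^z) γ - e^z ∫₀^z log t · e^{-t} dt`, and both terms are
`O(z log z)` as `z → 0⁺`, the integral because `∫₀^z |log t| dt = z - z log z`.
Substituting `z = ε / x` gives the claim. -/

open MeasureTheory Filter Topology Asymptotics

/-- The exponential integral `E1(z) = ∫_z^∞ e^(−t)/t dt`. -/
noncomputable def E1 (z : ℝ) : ℝ := ∫ t in Set.Ioi z, Real.exp (-t) / t

/-- `ξ1(x, ε) = e^(ε/x)·E1(ε/x)/x`, the expected inverse SNR under the truncated
exponential distribution with mean parameter `x` and truncation threshold `ε`. -/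
noncomputable def ξ1 (x ε : ℝ) : ℝ := Real.exp (ε / x) * E1 (ε / x) / x

open Real Set

lemma abs_log_le_two_mul_rpow_neg_half_add_self {t : ℝ} (ht : 0 < t) :
    |log t| ≤ 2 * t ^ (-(1 / 2) : ℝ) + t := by
  have hrpow : 0 < t ^ (-(1 / 2) : ℝ) := rpow_pos_of_pos ht _
  rcases le_total t 1 with ht1 | ht1
  · have h := log_le_sub_one_of_pos hrpow
    rw [log_rpow ht] at h
    rw [abs_of_nonpos (log_nonpos ht.le ht1)]
    linarith
  · rw [abs_of_nonneg (log_nonneg ht1)]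
    linarith [log_le_sub_one_of_pos ht]

lemma integrableOn_log_mul_exp_neg_Ioi_zero :
    IntegrableOn (fun t => log t * exp (-t)) (Ioi 0) := by
  have hdom : IntegrableOn
      (fun t => 2 * (exp (-t) * t ^ ((1 / 2 : ℝ) - 1)) + exp (-t) * t ^ ((2 : ℝ) - 1)) (Ioi 0) :=
    ((GammaIntegral_convergent (by norm_num)).const_mul 2).add
      (GammaIntegral_convergent (by norm_num))
  refine hdom.mono' (by fun_prop) ?_
  filter_upwards [ae_restrict_mem measurableSet_Ioi] with t (ht : 0 < t)
  have h := mul_le_mul_of_nonneg_right (abs_log_le_two_mul_rpow_neg_half_add_self ht)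
    (exp_pos (-t)).le
  norm_num [abs_mul, abs_of_pos (exp_pos _)] at h ⊢
  linarith

lemma integral_log_mul_exp_neg_Ioi_zero :
    ∫ t in Ioi 0, log t * exp (-t) = -eulerMascheroniConstant := by
  have hGamma : HasDerivAt Complex.GammaIntegral (-eulerMascheroniConstant : ℂ) 1 :=
    Complex.hasDerivAt_Gamma_one.congr_of_eventuallyEq <| by
      filter_upwards [(isOpen_lt continuous_const Complex.continuous_re).mem_nhds
        (by norm_num : (0 : ℝ) < (1 : ℂ).re)] with s hs
      exact (Complex.Gamma_eq_integral hs).symm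
  have h := (Complex.hasDerivAt_GammaIntegral (by norm_num)).unique hGamma
  simp only [sub_self, Complex.cpow_zero, one_mul, ← Complex.ofReal_mul,
    integral_complex_ofReal] at h
  exact_mod_cast h

lemma integrableOn_exp_neg_div_Ioi {z : ℝ} (hz : 0 < z) :
    IntegrableOn (fun t => exp (-t) / t) (Ioi z) := by
  refine ((exp_neg_integrableOn_Ioi z one_pos).div_const z).mono'
    (by fun_prop : Measurable fun t : ℝ => exp (-t) / t).aestronglyMeasurable ?_
  filter_upwards [ae_restrict_mem measurableSet_Ioi] with t (ht : z < t)
  rw [norm_div, norm_of_nonneg (exp_pos _).le, norm_of_nonneg (hz.trans ht).le, neg_one_mul]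
  gcongr

lemma tendsto_exp_neg_mul_log_atTop :
    Tendsto (fun t => exp (-t) * log t) atTop (𝓝 0) := by
  refine squeeze_zero_norm' ?_ (by simpa using tendsto_pow_mul_exp_neg_atTop_nhds_zero 1)
  filter_upwards [eventually_ge_atTop 1] with t ht
  rw [norm_mul, norm_of_nonneg (exp_pos _).le, norm_of_nonneg (log_nonneg ht), mul_comm]
  gcongr
  linarith [log_le_sub_one_of_pos (zero_lt_one.trans_le ht)]

lemma integral_log_mul_exp_neg_Ioi {z : ℝ} (hz : 0 < z) :
    ∫ t in Ioi z, log t * exp (-t) = exp (-z) * log z + E1 z := by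
  have hderiv : ∀ t ∈ Ici z, HasDerivAt (fun t => -(exp (-t) * log t))
      (log t * exp (-t) - exp (-t) / t) t := fun t ht =>
    (((hasDerivAt_neg t).exp).mul (hasDerivAt_log (hz.trans_le ht).ne')).neg.congr_deriv
      (by ring)
  have h := integral_Ioi_of_hasDerivAt_of_tendsto' hderiv
    (integrableOn_log_mul_exp_neg_Ioi_zero.mono_set (Ioi_subset_Ioi hz.le) |>.sub
      (integrableOn_exp_neg_div_Ioi hz)) tendsto_exp_neg_mul_log_atTop.neg
  rw [integral_sub (integrableOn_log_mul_exp_neg_Ioi_zero.mono_set (Ioi_subset_Ioi hz.le))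
    (integrableOn_exp_neg_div_Ioi hz), neg_zero] at h
  rw [E1]
  linarith

lemma E1_eq_neg_eulerMascheroniConstant_sub {z : ℝ} (hz : 0 < z) :
    E1 z = -eulerMascheroniConstant - exp (-z) * log z - ∫ t in 0..z, log t * exp (-t) := by
  have hsplit := setIntegral_union (Ioc_disjoint_Ioi le_rfl) measurableSet_Ioi
    (integrableOn_log_mul_exp_neg_Ioi_zero.mono_set Ioc_subset_Ioi_self)
    (integrableOn_log_mul_exp_neg_Ioi_zero.mono_set (Ioi_subset_Ioi hz.le))
  rw [Ioc_union_Ioi_eq_Ioi hz.le, integral_log_mul_exp_neg_Ioi_zero,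
    integral_log_mul_exp_neg_Ioi hz, ← intervalIntegral.integral_of_le hz.le] at hsplit
  linarith

lemma isBigO_self_mul_log : (fun ε : ℝ => ε) =O[𝓝[>] 0] fun ε => ε * log ε := by
  have h : (fun _ => (1 : ℝ)) =O[𝓝[>] 0] log :=
    ((isLittleO_one_left_iff ℝ).2 (tendsto_abs_atBot_atTop.comp tendsto_log_nhdsGT_zero)).isBigO
  simpa using (isBigO_refl (fun ε : ℝ => ε) _).mul h

lemma isBigO_integral_log_mul_exp_neg :
    (fun z => ∫ t in 0..z, log t * exp (-t)) =O[𝓝[>] 0] fun z => z * log z := by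
  have hbound : (fun z => ∫ t in 0..z, log t * exp (-t)) =O[𝓝[>] 0] fun z => z - z * log z := by
    refine IsBigO.of_bound 1 ?_
    filter_upwards [Ioo_mem_nhdsGT one_pos] with z ⟨hz0, hz1⟩
    have h := intervalIntegral.norm_integral_le_of_norm_le hz0.le
      (f := fun t => log t * exp (-t)) (g := fun t => -log t) ?_
      intervalIntegral.intervalIntegrable_log'.neg
    · rw [intervalIntegral.integral_neg, integral_log_from_zero] at h
      rw [one_mul, norm_of_nonneg (show 0 ≤ z - z * log z by nlinarith [log_neg hz0 hz1])]
      linarith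
    · refine ae_of_all _ fun t ⟨ht0, htz⟩ => ?_
      have hlog : log t ≤ 0 := log_nonpos ht0.le (htz.trans hz1.le)
      rw [norm_mul, norm_of_nonpos hlog, norm_of_nonneg (exp_pos _).le]
      exact mul_le_of_le_one_right (neg_nonneg.2 hlog) (exp_le_one_iff.2 (by linarith))
  exact hbound.trans (isBigO_self_mul_log.sub (isBigO_refl _ _))

lemma isBigO_exp_mul_E1_add_log :
    (fun z => exp z * E1 z + (eulerMascheroniConstant + log z)) =O[𝓝[>] 0]
      fun z => z * log z := by
  have hexp : (fun z => exp z - 1) =O[𝓝[>] 0] fun z => z := by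
    simpa using ((hasDerivAt_exp 0).isBigO_sub).mono nhdsWithin_le_nhds
  have hbdd : (fun z => exp z) =O[𝓝[>] 0] fun _ => (1 : ℝ) :=
    ((continuous_exp.tendsto 0).isBigO_one ℝ).mono nhdsWithin_le_nhds
  have hmain := ((hexp.trans isBigO_self_mul_log).const_mul_left (-eulerMascheroniConstant)).sub
    (by simpa using hbdd.mul isBigO_integral_log_mul_exp_neg)
  refine hmain.congr' ?_ EventuallyEq.rfl
  filter_upwards [self_mem_nhdsWithin] with z (hz : 0 < z)
  have hexp_cancel : exp z * exp (-z) = 1 := by rw [← exp_add, add_neg_cancel, exp_zero]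
  rw [E1_eq_neg_eulerMascheroniConstant_sub hz]
  linear_combination log z * hexp_cancel

lemma isBigO_div_mul_log_div {x : ℝ} (hx : x ≠ 0) :
    (fun ε => ε / x * log (ε / x)) =O[𝓝[>] 0] fun ε => ε * log ε := by
  have h := ((isBigO_refl (fun ε : ℝ => ε * log ε) _).const_mul_left x⁻¹).sub
    (isBigO_self_mul_log.const_mul_left (x⁻¹ * log x))
  refine h.congr' ?_ EventuallyEq.rfl
  filter_upwards [self_mem_nhdsWithin] with ε (hε : 0 < ε)
  rw [log_div hε.ne' hx]
  ring

/-- Equation (40) of Lemma 2: as `ε → 0⁺`,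
`ξ1(x, ε) = −(1/x)(γ' + log(ε/x)) + O(ε log ε)`. -/
theorem stmt_10 (x : ℝ) (hx : 0 < x) :
    (fun ε : ℝ => ξ1 x ε + (1 / x) * (Real.eulerMascheroniConstant + Real.log (ε / x)))
      =O[𝓝[>] (0 : ℝ)] (fun ε : ℝ => ε * Real.log ε) := by
  have hscale : Tendsto (fun ε => ε / x) (𝓝[>] 0) (𝓝[>] 0) :=
    tendsto_nhdsWithin_iff.2
      ⟨((continuous_id.div_const x).tendsto' 0 0 (zero_div x)).mono_left nhdsWithin_le_nhds,
        by filter_upwards [self_mem_nhdsWithin] with ε (hε : 0 < ε) using div_pos hε hx⟩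
  have h := ((isBigO_exp_mul_E1_add_log.comp_tendsto hscale).trans
    (isBigO_div_mul_log_div hx.ne')).const_mul_left (1 / x)
  refine h.congr' (Eventually.of_forall fun ε => ?_) EventuallyEq.rfl
  simp only [ξ1, Function.comp_apply]
  ring
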